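/- arXiv:2103.01017 — 2 statements merged into one kernel-verified Lean document; each statement's English description precedes it below -/
import Mathlib

section
/- Let D be a strongly connected digraph, let u and v be vertices of D, and let P be a directed path from u to v in D such that the digraph obtained from D by reversing every arc of P is strongly connected. Then u two-reaches v in D. -/
/-- The list of arcs (consecutive pairs) of a list of vertices. -/
def listArcs {V : Type*} (p : List V) : List (V × V) := p.zip p.tail

/-- `p` is a directed path from `u` to `v` in the digraph with arc set `A`. -/
def IsDipath {V : Type*} (A : Finset (V × V)) (u v : V) (p : List V) : Prop :=
  p ≠ [] ∧ p.head? = some u ∧ p.getLast? = some v ∧ p.Nodup ∧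
    p.Chain' (fun a b => (a, b) ∈ A)

/-- Two paths (given as vertex lists) are arc-disjoint. -/
def ArcDisjoint {V : Type*} (p q : List V) : Prop :=
  ∀ e ∈ listArcs p, e ∉ listArcs q

/-- `u` reaches `v`: there is a directed path from `u` to `v`. -/
def Reaches {V : Type*} (A : Finset (V × V)) (u v : V) : Prop :=
  ∃ p, IsDipath A u v p

/-- `u` two-reaches `v`: there are two arc-disjoint directed paths from `u` to `v`. -/
def TwoReaches {V : Type*} (A : Finset (V × V)) (u v : V) : Prop :=
  ∃ p q, IsDipath A u v p ∧ IsDipath A u v q ∧ ArcDisjoint p q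

/-- A digraph is strongly connected if every vertex reaches every other vertex. -/
def StronglyConnected {V : Type*} (A : Finset (V × V)) : Prop :=
  ∀ u v : V, Reaches A u v

/-- The digraph obtained by reversing every arc of the path `p`. -/
def reverseAlong {V : Type*} [DecidableEq V] (A : Finset (V × V)) (p : List V) :
    Finset (V × V) :=
  (A \ (listArcs p).toFinset) ∪ ((listArcs p).map Prod.swap).toFinset

/-- The indegree of a vertex in the digraph with arc set `A`. -/
def inDeg {V : Type*} [DecidableEq V] (A : Finset (V × V)) (v : V) : ℕ :=
  (A.filter (fun e => e.2 = v)).card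

/-- The indegree sequence: the indegrees of all vertices in non-increasing order. -/
def degSeq (V : Type*) [Fintype V] [DecidableEq V] (A : Finset (V × V)) : List ℕ :=
  ((Finset.univ.val.map (inDeg A)).sort (· ≤ ·)).reverse

/-- `A` is an orientation of the simple graph `G`: every edge of `G` gets exactly one
direction, and every arc of `A` comes from an edge of `G`. -/
def IsOrientation {V : Type*} (G : SimpleGraph V) (A : Finset (V × V)) : Prop :=
  (∀ a b : V, G.Adj a b ↔ ((a, b) ∈ A ∨ (b, a) ∈ A)) ∧
    ∀ a b : V, ¬((a, b) ∈ A ∧ (b, a) ∈ A)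

/-- The underlying undirected simple graph of a digraph. -/
def underlying {V : Type*} (A : Finset (V × V)) : SimpleGraph V :=
  SimpleGraph.fromRel (fun a b => (a, b) ∈ A)

/-- `p` is a directed path from `u` to `v` all of whose vertices lie in `S`. -/
def IsDipathIn {V : Type*} (A : Finset (V × V)) (S : Set V) (u v : V) (p : List V) : Prop :=
  IsDipath A u v p ∧ ∀ x ∈ p, x ∈ S

/-- `u` reaches `v` within the induced subdigraph on `S`. -/
def ReachesWithin {V : Type*} (A : Finset (V × V)) (S : Set V) (u v : V) : Prop :=
  ∃ p, IsDipathIn A S u v p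

/-!
Let `q` be a `u`–`v` path in the digraph obtained by reversing `P`. Each arc of `q` is either an
arc of `D` off `P` or the reverse of an arc of `P`. Discarding every arc of `P` whose reverse lies
on `q`, together with that reverse, leaves a set `F` of arcs of `D` whose net out-degree is the sum
of those of `P` and `q`: `2` at `u`, `-2` at `v` and `0` elsewhere. An arc set whose net
out-degree is nonnegative away from `v` and positive at `u` contains a `u`–`v` path (walk
greedily along unused arcs). Removing one such path from `F` leaves net out-degree `1` at `u` and
`-1` at `v`, so a second, arc-disjoint path remains.
-/

open Finset Relation

section

variable {V : Type*}

lemma listArcs_cons_cons (a b : V) (l : List V) :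
    listArcs (a :: b :: l) = (a, b) :: listArcs (b :: l) := rfl

lemma fst_mem_of_mem_listArcs {p : List V} {e : V × V} (he : e ∈ listArcs p) : e.1 ∈ p :=
  (List.of_mem_zip he).1

lemma forall_mem_listArcs_of_isChain {A : Finset (V × V)} :
    ∀ {p : List V}, p.IsChain (fun a b => (a, b) ∈ A) → ∀ e ∈ listArcs p, e ∈ A
  | [], _, _, he | [_], _, _, he => by simp [listArcs] at he
  | a :: b :: l, hc, e, he => by
    rw [List.isChain_cons_cons] at hc
    rw [listArcs_cons_cons, List.mem_cons] at he
    rcases he with rfl | he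
    exacts [hc.1, forall_mem_listArcs_of_isChain hc.2 e he]

lemma IsDipath.mono {A B : Finset (V × V)} {u v : V} {p : List V} (hAB : A ⊆ B)
    (hp : IsDipath A u v p) : IsDipath B u v p :=
  ⟨hp.1, hp.2.1, hp.2.2.1, hp.2.2.2.1, hp.2.2.2.2.imp fun _ _ h => hAB h⟩

lemma reaches_self (A : Finset (V × V)) (v : V) : Reaches A v v :=
  ⟨[v], by simp, rfl, rfl, by simp, List.isChain_singleton v⟩

lemma Reaches.head {A : Finset (V × V)} {a w v : V} (ha : (a, w) ∈ A) :
    Reaches A w v → Reaches A a v := by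
  rintro ⟨q, hne, hw, hv, hnd, hc⟩
  by_cases haq : a ∈ q
  · obtain ⟨s, t, rfl⟩ := List.append_of_mem haq
    refine ⟨a :: t, by simp, rfl, ?_, hnd.sublist (List.sublist_append_right s _),
      hc.right_of_append⟩
    rwa [List.getLast?_append_of_ne_nil _ (List.cons_ne_nil a t)] at hv
  · obtain ⟨b, t, rfl⟩ := List.exists_cons_of_ne_nil hne
    obtain rfl : b = w := by simpa using hw
    refine ⟨a :: b :: t, by simp, rfl, ?_, List.nodup_cons.2 ⟨haq, hnd⟩,
      List.isChain_cons_cons.2 ⟨ha, hc⟩⟩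
    rwa [List.getLast?_cons_cons]

lemma reaches_of_reflTransGen {A : Finset (V × V)} {u v : V}
    (h : ReflTransGen (fun a b => (a, b) ∈ A) u v) : Reaches A u v := by
  induction h using ReflTransGen.head_induction_on with
  | refl => exact reaches_self A v
  | head ha _ ih => exact ih.head ha

lemma TwoReaches.mono {A B : Finset (V × V)} {u v : V} (hAB : A ⊆ B) :
    TwoReaches A u v → TwoReaches B u v
  | ⟨p, q, hp, hq, hpq⟩ => ⟨p, q, hp.mono hAB, hq.mono hAB, hpq⟩

section netOutDeg

variable [DecidableEq V]

def netOutDeg (F : Finset (V × V)) (x : V) : ℤ :=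
  ∑ e ∈ F, ((if e.1 = x then 1 else 0) - (if e.2 = x then 1 else 0))

variable {S T : Finset (V × V)}

lemma netOutDeg_union (h : Disjoint S T) : netOutDeg (S ∪ T) = netOutDeg S + netOutDeg T := by
  funext x
  exact sum_union h

lemma netOutDeg_sdiff (h : T ⊆ S) : netOutDeg (S \ T) = netOutDeg S - netOutDeg T := by
  funext x
  exact sum_sdiff_eq_sub h

lemma netOutDeg_image_swap : netOutDeg (S.image Prod.swap) = -netOutDeg S := by
  funext x
  simp only [netOutDeg, Pi.neg_apply, sum_image Prod.swap_injective.injOn, Prod.fst_swap,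
    Prod.snd_swap, ← sum_neg_distrib, neg_sub]

lemma netOutDeg_insert {e : V × V} (he : e ∉ S) :
    netOutDeg (insert e S) = Pi.single e.1 1 - Pi.single e.2 1 + netOutDeg S := by
  funext x
  simp [netOutDeg, sum_insert he, Pi.single_apply, eq_comm]

lemma netOutDeg_listArcs_cons {a : V} {l : List V} (h : (a :: l).Nodup) :
    netOutDeg (listArcs (a :: l)).toFinset =
      Pi.single a 1 - Pi.single ((a :: l).getLast (List.cons_ne_nil a l)) 1 := by
  induction l generalizing a with
  | nil => funext x; simp [listArcs, netOutDeg]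
  | cons b l ih =>
    have hab : (a, b) ∉ listArcs (b :: l) :=
      fun hm => (List.nodup_cons.1 h).1 (fst_mem_of_mem_listArcs hm)
    rw [listArcs_cons_cons, List.toFinset_cons, netOutDeg_insert (by simpa using hab),
      ih h.of_cons, List.getLast_cons_cons, sub_add_sub_cancel]

namespace IsDipath

variable {A : Finset (V × V)} {u v : V} {p : List V}

lemma arcs_subset (hp : IsDipath A u v p) : (listArcs p).toFinset ⊆ A :=
  fun e he => forall_mem_listArcs_of_isChain hp.2.2.2.2 e (List.mem_toFinset.1 he)

lemma netOutDeg_arcs (hp : IsDipath A u v p) :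
    netOutDeg (listArcs p).toFinset = Pi.single u 1 - Pi.single v 1 := by
  obtain ⟨hne, hu, hv, hnd, -⟩ := hp
  cases p with
  | nil => contradiction
  | cons a l =>
    obtain rfl : a = u := by simpa using hu
    rw [List.getLast?_eq_some_getLast hne, Option.some_inj] at hv
    rw [netOutDeg_listArcs_cons hnd, hv]

end IsDipath

section extraction

variable {F : Finset (V × V)} {u v : V}

lemma reflTransGen_of_netOutDeg_nonneg (hbal : ∀ x ≠ v, 0 ≤ netOutDeg F x)
    (hu : u ≠ v → 0 < netOutDeg F u) : ReflTransGen (fun a b => (a, b) ∈ F) u v := by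
  induction F using Finset.strongInduction generalizing u with
  | H F ih =>
  by_cases huv : u = v
  · exact huv ▸ .refl
  obtain ⟨⟨a, w⟩, haw, hpos⟩ : ∃ e ∈ F,
      (0 : ℤ) < (if e.1 = u then 1 else 0) - (if e.2 = u then 1 else 0) :=
    exists_lt_of_sum_lt (by simpa [netOutDeg] using hu huv)
  obtain rfl : a = u := by
    by_contra h
    simp only [h, if_false] at hpos
    split_ifs at hpos <;> omega
  have herase (x : V) : netOutDeg (F.erase (a, w)) x =
      netOutDeg F x - ((if a = x then 1 else 0) - (if w = x then 1 else 0)) :=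
    sum_erase_eq_sub haw
  have hw : ReflTransGen (fun x y => (x, y) ∈ F.erase (a, w)) w v := by
    refine ih _ (erase_ssubset haw) (fun x hx => ?_) (fun hwv => ?_) <;> rw [herase]
    · have hx' := hbal x hx
      have hu' := hu huv
      split_ifs with hax <;> subst_vars <;> omega
    · have hw' := hbal w hwv
      have hu' := hu huv
      rw [if_pos rfl]
      split_ifs with haw' <;> subst_vars <;> omega
  exact .head haw (ReflTransGen.mono (fun _ _ => mem_of_mem_erase) _ _ hw)

lemma reaches_of_netOutDeg_eq_smul {k : ℤ} (hk : 0 < k)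
    (h : netOutDeg F = k • (Pi.single u 1 - Pi.single v 1)) : Reaches F u v := by
  refine reaches_of_reflTransGen (reflTransGen_of_netOutDeg_nonneg (fun x hx => ?_) fun huv => ?_)
  · simp only [h, Pi.smul_apply, Pi.sub_apply, Pi.single_apply, hx, if_false, smul_eq_mul]
    split_ifs <;> omega
  · simp [h, huv, hk]

lemma twoReaches_of_netOutDeg_eq_two_smul
    (h : netOutDeg F = (2 : ℤ) • (Pi.single u 1 - Pi.single v 1)) : TwoReaches F u v := by
  obtain ⟨p, hp⟩ := reaches_of_netOutDeg_eq_smul two_pos h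
  obtain ⟨q, hq⟩ := reaches_of_netOutDeg_eq_smul (F := F \ (listArcs p).toFinset) one_pos
    (by rw [netOutDeg_sdiff hp.arcs_subset, h, hp.netOutDeg_arcs, two_smul, one_smul,
      add_sub_cancel_right])
  refine ⟨p, q, hp, hq.mono sdiff_subset, fun e hep heq => ?_⟩
  exact (mem_sdiff.1 (hq.arcs_subset (List.mem_toFinset.2 heq))).2 (List.mem_toFinset.2 hep)

end extraction

section cancellation

variable {A : Finset (V × V)}

lemma disjoint_sdiff_image_swap (hT : T ⊆ (A \ S) ∪ S.image Prod.swap) :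
    Disjoint (S \ T.image Prod.swap) (T \ S.image Prod.swap) := by
  refine disjoint_left.2 fun e heS heT => ?_
  obtain ⟨heS, -⟩ := mem_sdiff.1 heS
  obtain ⟨heT, hne⟩ := mem_sdiff.1 heT
  rcases mem_union.1 (hT heT) with h | h
  exacts [(mem_sdiff.1 h).2 heS, hne h]

lemma sdiff_image_swap_union_subset (hS : S ⊆ A) (hT : T ⊆ (A \ S) ∪ S.image Prod.swap) :
    (S \ T.image Prod.swap) ∪ (T \ S.image Prod.swap) ⊆ A := by
  refine union_subset (sdiff_subset.trans hS) fun e he => ?_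
  obtain ⟨heT, hne⟩ := mem_sdiff.1 he
  rcases mem_union.1 (hT heT) with h | h
  exacts [(mem_sdiff.1 h).1, absurd h hne]

lemma netOutDeg_sdiff_image_swap_union
    (h : Disjoint (S \ T.image Prod.swap) (T \ S.image Prod.swap)) :
    netOutDeg ((S \ T.image Prod.swap) ∪ (T \ S.image Prod.swap)) =
      netOutDeg S + netOutDeg T := by
  have hswap : T ∩ S.image Prod.swap = (S ∩ T.image Prod.swap).image Prod.swap := by
    rw [image_inter _ _ Prod.swap_injective, image_image, Prod.swap_swap_eq, image_id,
      inter_comm]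
  rw [netOutDeg_union h, ← sdiff_inter_self_left S, ← sdiff_inter_self_left T, hswap,
    netOutDeg_sdiff inter_subset_left, netOutDeg_sdiff (hswap ▸ inter_subset_left),
    netOutDeg_image_swap]
  abel

end cancellation

end netOutDeg

end

theorem stmt_2_general {V : Type*} [DecidableEq V] (A : Finset (V × V))
    (u v : V) (p : List V) (hp : IsDipath A u v p)
    (hrev : StronglyConnected (reverseAlong A p)) :
    TwoReaches A u v := by
  obtain ⟨q, hq⟩ := hrev u v
  set S := (listArcs p).toFinset
  have hT : (listArcs q).toFinset ⊆ (A \ S) ∪ S.image Prod.swap := by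
    have hswap : ((listArcs p).map Prod.swap).toFinset = S.image Prod.swap := by ext; simp [S]
    simpa only [reverseAlong, hswap] using hq.arcs_subset
  refine (twoReaches_of_netOutDeg_eq_two_smul ?_).mono
    (sdiff_image_swap_union_subset hp.arcs_subset hT)
  rw [netOutDeg_sdiff_image_swap_union (disjoint_sdiff_image_swap hT), hp.netOutDeg_arcs,
    hq.netOutDeg_arcs, two_smul]

/-- If reversing a directed path from `u` to `v` in a strongly connected digraph yields a
strongly connected digraph, then `u` two-reaches `v` in the original digraph. -/
theorem stmt_2 {V : Type*} [Fintype V] [DecidableEq V] (A : Finset (V × V))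
    (hsc : StronglyConnected A) (u v : V) (p : List V) (hp : IsDipath A u v p)
    (hrev : StronglyConnected (reverseAlong A p)) :
    TwoReaches A u v :=
  stmt_2_general A u v p hp hrev
end

section
/- Let D = (V, Λ) be a strongly connected digraph, let v ∈ V, let U be the set of vertices that two-reach v in D, and let C be a connected component of D[V∖U] (components taken in the underlying undirected graph). Then no vertex of C has directed paths in D[V∖U] to two distinct vertices of C each of which is the tail of an arc into U. Equivalently, the sets W_i of vertices of C that reach (within C) the i-th tail of an arc from C to U are pairwise disjoint. -/
section

variable {V : Type*}

theorem isChain_iff_forall_mem_listArcs {R : V → V → Prop} :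
    ∀ {p : List V}, p.IsChain R ↔ ∀ e ∈ listArcs p, R e.1 e.2
  | [] => by simp [listArcs]
  | [a] => by simp [listArcs]
  | a :: b :: l => by
    rw [List.isChain_cons_cons, isChain_iff_forall_mem_listArcs]
    simp [listArcs]

theorem snd_mem_of_mem_listArcs_cons {a : V} {l : List V} {e : V × V}
    (he : e ∈ listArcs (a :: l)) : e.2 ∈ l :=
  (List.of_mem_zip he).2

theorem subsingleton_listArcs_exiting {S : Set V} {p : List V}
    (hp : p.IsChain fun x y => x ∉ S → y ∉ S) :
    {e | e ∈ listArcs p ∧ e.1 ∈ S ∧ e.2 ∉ S}.Subsingleton := by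
  induction hp with
  | nil => simp [listArcs]
  | singleton => simp [listArcs]
  | @cons_cons a b l _ hbl ih =>
    have hout : b ∉ S → ∀ x ∈ b :: l, x ∉ S := fun hb =>
      List.IsChain.induction (· ∉ S) _ hbl (fun _ _ h => h) fun _ => hb
    have hfst {e : V × V} (he : e ∈ listArcs (b :: l)) : e.1 ∈ b :: l := (List.of_mem_zip he).1
    rintro e ⟨he, he₁, he₂⟩ e' ⟨he', he'₁, he'₂⟩
    change e ∈ (a, b) :: listArcs (b :: l) at he
    change e' ∈ (a, b) :: listArcs (b :: l) at he'
    rcases List.mem_cons.1 he with rfl | he <;> rcases List.mem_cons.1 he' with rfl | he'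
    · rfl
    · exact absurd he'₁ (hout he₂ _ (hfst he'))
    · exact absurd he₁ (hout he'₂ _ (hfst he))
    · exact ih ⟨he, he₁, he₂⟩ ⟨he', he'₁, he'₂⟩

theorem exists_cons_suffix_forall_not_mem {p q : List V} (h : ∃ w ∈ p, w ∈ q) :
    ∃ z l, z :: l <:+ p ∧ z ∈ q ∧ ∀ w ∈ l, w ∉ q := by
  induction p with
  | nil => simp at h
  | cons a p ih =>
    by_cases hp : ∃ w ∈ p, w ∈ q
    · obtain ⟨z, l, hzl, hzq, hl⟩ := ih hp
      exact ⟨z, l, hzl.trans (List.suffix_cons a p), hzq, hl⟩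
    · simp only [not_exists, not_and] at hp
      obtain ⟨w, hw, hwq⟩ := h
      rcases List.mem_cons.1 hw with rfl | hw
      · exact ⟨w, p, List.suffix_refl _, hwq, hp⟩
      · exact absurd hwq (hp w hw)

section Dipath

variable {A B : Finset (V × V)} {u v w : V} {p l : List V}

theorem IsDipath.head_mem (hp : IsDipath A u v p) : u ∈ p :=
  List.mem_of_mem_head? hp.2.1

theorem IsDipath.mem_of_mem_listArcs (hp : IsDipath A u v p) {e : V × V}
    (he : e ∈ listArcs p) : e ∈ A :=
  isChain_iff_forall_mem_listArcs.1 hp.2.2.2.2 e he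

theorem IsDipath.of_forall_mem_listArcs (hp : IsDipath A u v p)
    (h : ∀ e ∈ listArcs p, e ∈ B) : IsDipath B u v p :=
  ⟨hp.1, hp.2.1, hp.2.2.1, hp.2.2.2.1, isChain_iff_forall_mem_listArcs.2 h⟩

theorem IsDipath.cons (hp : IsDipath A w v p) {a : V} (ha : (a, w) ∈ A) (hap : a ∉ p) :
    IsDipath A a v (a :: p) := by
  obtain ⟨-, hhead, hlast, hnd, hc⟩ := hp
  obtain ⟨l, rfl⟩ := List.head?_eq_some_iff.1 hhead
  exact ⟨List.cons_ne_nil _ _, rfl, by rwa [List.getLast?_cons_cons],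
    List.nodup_cons.2 ⟨hap, hnd⟩, .cons_cons ha hc⟩

theorem IsDipath.of_cons_suffix (hp : IsDipath A u v p) (h : w :: l <:+ p) :
    IsDipath A w v (w :: l) := by
  obtain ⟨-, -, hlast, hnd, hc⟩ := hp
  obtain ⟨l', rfl⟩ := h
  refine ⟨List.cons_ne_nil _ _, rfl, ?_, hnd.sublist (List.sublist_append_right _ _),
    hc.suffix (List.suffix_append _ _)⟩
  rwa [List.getLast?_append_of_ne_nil _ (List.cons_ne_nil _ _)] at hlast

theorem reaches_iff_reflTransGen :
    Reaches A u v ↔ Relation.ReflTransGen (fun a b => (a, b) ∈ A) u v := by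
  constructor
  · rintro ⟨p, -, hhead, hlast, -, hc⟩
    obtain ⟨l, rfl⟩ := List.head?_eq_some_iff.1 hhead
    exact List.relationReflTransGen_of_exists_isChain_cons l hc
      ((List.getLast_eq_iff_getLast?_eq_some _).2 hlast)
  · intro h
    induction h using Relation.ReflTransGen.head_induction_on with
    | refl => exact ⟨[v], List.cons_ne_nil _ _, rfl, rfl, List.nodup_singleton _, .singleton _⟩
    | @head a b hab _ ih =>
      obtain ⟨p, hp⟩ := ih
      by_cases hap : a ∈ p
      · obtain ⟨l₁, l₂, rfl⟩ := List.append_of_mem hap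
        exact ⟨_, hp.of_cons_suffix (List.suffix_append _ _)⟩
      · exact ⟨_, hp.cons hab hap⟩

theorem Reaches.refl (A : Finset (V × V)) (u : V) : Reaches A u u :=
  reaches_iff_reflTransGen.2 .refl

theorem Reaches.trans (h₁ : Reaches A u w) (h₂ : Reaches A w v) : Reaches A u v :=
  reaches_iff_reflTransGen.2 <|
    (reaches_iff_reflTransGen.1 h₁).trans (reaches_iff_reflTransGen.1 h₂)

theorem Reaches.tail (h : Reaches A u w) (hwv : (w, v) ∈ A) : Reaches A u v :=
  reaches_iff_reflTransGen.2 ((reaches_iff_reflTransGen.1 h).tail hwv)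

theorem TwoReaches.reaches (h : TwoReaches A u v) : Reaches A u v :=
  let ⟨p, _, hp, _⟩ := h
  ⟨p, hp⟩

theorem Reaches.exists_mem_not_mem {S : Set V} (h : Reaches A u v) (hu : u ∈ S) (hv : v ∉ S) :
    ∃ e ∈ A, e.1 ∈ S ∧ e.2 ∉ S := by
  rw [reaches_iff_reflTransGen] at h
  induction h with
  | refl => exact absurd hu hv
  | @tail b c _ hbc ih =>
    by_cases hb : b ∈ S
    · exact ⟨(b, c), hbc, hb, hv⟩
    · exact ih hb

end Dipath

section Erase

variable [DecidableEq V] {A : Finset (V × V)} {u v w y : V} {p : List V}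

theorem IsDipath.reaches_erase (hp : IsDipath A u v p) {e : V × V} (he : e ∉ listArcs p) :
    Reaches (A.erase e) u v :=
  ⟨p, hp.of_forall_mem_listArcs fun _ hf =>
    Finset.mem_erase.2 ⟨ne_of_mem_of_not_mem hf he, hp.mem_of_mem_listArcs hf⟩⟩

theorem TwoReaches.reaches_erase (h : TwoReaches A u v) (e : V × V) :
    Reaches (A.erase e) u v := by
  obtain ⟨p, q, hp, hq, hpq⟩ := h
  by_cases hep : e ∈ listArcs p
  · exact hq.reaches_erase (hpq e hep)
  · exact hp.reaches_erase hep

theorem IsDipath.reaches_erase_of_twoReaches (hp : IsDipath A u w p) (hwy : (w, y) ∈ A)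
    (hy : TwoReaches A y v) {e : V × V} (hep : e ∉ listArcs p) (he : e ≠ (w, y)) :
    Reaches (A.erase e) u v :=
  ((hp.reaches_erase hep).tail (Finset.mem_erase.2 ⟨he.symm, hwy⟩)).trans (hy.reaches_erase e)

theorem reaches_erase_of_fork {z s t y' : V} {l₁ l₂ : List V}
    (h₁ : IsDipath A z s (z :: l₁)) (h₂ : IsDipath A z t (z :: l₂))
    (hl : ∀ x ∈ l₁, x ∉ l₂)
    (hsy : (s, y) ∈ A) (hty' : (t, y') ∈ A) (hy : TwoReaches A y v) (hy' : TwoReaches A y' v)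
    (hyl₂ : y ∉ l₂) (hy'l₁ : y' ∉ l₁) (hst : s ≠ t) (e : V × V) :
    Reaches (A.erase e) z v := by
  by_cases he : e ∈ listArcs (z :: l₁) ∨ e = (s, y)
  · refine h₂.reaches_erase_of_twoReaches hty' hy' ?_ ?_
    · intro he₂
      have h₂e := snd_mem_of_mem_listArcs_cons he₂
      rcases he with he | rfl
      · exact hl _ (snd_mem_of_mem_listArcs_cons he) h₂e
      · exact hyl₂ h₂e
    · rintro rfl
      rcases he with he | he
      · exact hy'l₁ (snd_mem_of_mem_listArcs_cons he)
      · exact hst (congrArg Prod.fst he).symm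
  · simp only [not_or] at he
    exact h₁.reaches_erase_of_twoReaches hsy hy he.1 he.2

end Erase

section Flow

variable [DecidableEq V]

def netOutflow (F : Finset (V × V)) (w : V) : ℤ :=
  ∑ e ∈ F, ((if e.1 = w then 1 else 0) - if e.2 = w then 1 else 0)

theorem netOutflow_image_swap (F : Finset (V × V)) (w : V) :
    netOutflow (F.image Prod.swap) w = -netOutflow F w := by
  rw [netOutflow, netOutflow, Finset.sum_image fun _ _ _ _ h => Prod.swap_injective h,
    ← Finset.sum_neg_distrib]
  exact Finset.sum_congr rfl fun e _ => by simp

theorem netOutflow_listArcs {A : Finset (V × V)} {u v : V} {p : List V}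
    (hp : IsDipath A u v p) (w : V) :
    netOutflow (listArcs p).toFinset w = (if u = w then 1 else 0) - if v = w then 1 else 0 := by
  induction p generalizing u with
  | nil => exact absurd rfl hp.1
  | cons a l ih =>
    obtain ⟨-, hhead, hlast, hnd, hc⟩ := hp
    obtain rfl : a = u := by simpa using hhead
    cases l with
    | nil => simp_all [listArcs, netOutflow]
    | cons b l =>
      have hb : IsDipath A b v (b :: l) := ⟨List.cons_ne_nil _ _, rfl,
        by rwa [List.getLast?_cons_cons] at hlast, hnd.of_cons, hc.tail⟩
      have hab : (a, b) ∉ listArcs (b :: l) := fun h =>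
        (List.nodup_cons.1 hnd).1 (List.of_mem_zip h).1
      change netOutflow ((a, b) :: listArcs (b :: l)).toFinset w = _
      rw [List.toFinset_cons, netOutflow, Finset.sum_insert (by simpa using hab), ← netOutflow,
        ih hb]
      ring

-- Summed over `S`, the net outflow counts the arcs leaving `S` minus the arcs entering it.
theorem sum_netOutflow_nonpos {F : Finset (V × V)} {S : Finset V}
    (hS : ∀ e ∈ F, e.1 ∈ S → e.2 ∈ S) : ∑ w ∈ S, netOutflow F w ≤ 0 := by
  simp only [netOutflow]
  rw [Finset.sum_comm]
  refine Finset.sum_nonpos fun e he => ?_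
  rw [Finset.sum_sub_distrib, Finset.sum_ite_eq, Finset.sum_ite_eq]
  have := hS e he
  split_ifs <;> simp_all

theorem reaches_of_netOutflow_pos {F : Finset (V × V)} {z v : V} (hz : 0 < netOutflow F z)
    (hF : ∀ w ≠ v, 0 ≤ netOutflow F w) : Reaches F z v := by
  classical
  by_contra hv
  let S := (insert z (F.image Prod.snd)).filter (Reaches F z)
  have hzS : z ∈ S := Finset.mem_filter.2 ⟨Finset.mem_insert_self _ _, Reaches.refl F z⟩
  have hS : ∀ e ∈ F, e.1 ∈ S → e.2 ∈ S := fun e he h => Finset.mem_filter.2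
    ⟨Finset.mem_insert_of_mem (Finset.mem_image_of_mem _ he), (Finset.mem_filter.1 h).2.tail he⟩
  have hle : netOutflow F z ≤ ∑ w ∈ S, netOutflow F w := Finset.single_le_sum
    (fun w hw => hF w fun hwv => hv (hwv ▸ (Finset.mem_filter.1 hw).2)) hzS
  linarith [sum_netOutflow_nonpos hS]

theorem twoReaches_of_netOutflow {A F : Finset (V × V)} {z v : V} (hFA : F ⊆ A) (hzv : z ≠ v)
    (hF : ∀ w, netOutflow F w = 2 * ((if z = w then 1 else 0) - if v = w then 1 else 0)) :
    TwoReaches A z v := by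
  obtain ⟨p, hp⟩ := reaches_of_netOutflow_pos (F := F) (z := z) (v := v)
    (by simp [hF, hzv.symm]) fun w hw => by rw [hF]; split_ifs <;> simp_all
  have hpF : (listArcs p).toFinset ⊆ F := fun _ he =>
    hp.mem_of_mem_listArcs (List.mem_toFinset.1 he)
  have hF' (w : V) : netOutflow (F \ (listArcs p).toFinset) w =
      (if z = w then 1 else 0) - if v = w then 1 else 0 := by
    rw [netOutflow, Finset.sum_sdiff_eq_sub hpF, ← netOutflow, ← netOutflow, hF,
      netOutflow_listArcs hp]
    ring
  obtain ⟨q, hq⟩ := reaches_of_netOutflow_pos (F := F \ (listArcs p).toFinset) (z := z) (v := v)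
    (by simp [hF', hzv.symm]) fun w hw => by rw [hF']; split_ifs <;> simp_all
  refine ⟨p, q, hp.of_forall_mem_listArcs fun e he => hFA (hp.mem_of_mem_listArcs he),
    hq.of_forall_mem_listArcs fun e he => hFA (Finset.sdiff_subset (hq.mem_of_mem_listArcs he)),
    fun e hep heq => ?_⟩
  exact (Finset.mem_sdiff.1 (hq.mem_of_mem_listArcs heq)).2 (List.mem_toFinset.2 hep)

end Flow

section Menger

variable [DecidableEq V] {A : Finset (V × V)} {z v : V}

theorem mem_reverseAlong {p : List V} {e : V × V} :
    e ∈ reverseAlong A p ↔ (e ∈ A ∧ e ∉ listArcs p) ∨ e.swap ∈ listArcs p := by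
  simp [reverseAlong, Prod.swap_eq_iff_eq_swap]

theorem netOutflow_cancel (E E' : Finset (V × V))
    (h : Disjoint (E.filter (·.swap ∉ E')) (E'.filter (·.swap ∉ E))) (w : V) :
    netOutflow (E.filter (·.swap ∉ E') ∪ E'.filter (·.swap ∉ E)) w =
      netOutflow E w + netOutflow E' w := by
  have hE := Finset.sum_filter_not_add_sum_filter E (·.swap ∈ E')
    fun e => ((if e.1 = w then 1 else 0) - if e.2 = w then (1 : ℤ) else 0)
  have hE' := Finset.sum_filter_not_add_sum_filter E' (·.swap ∈ E)
    fun e => ((if e.1 = w then 1 else 0) - if e.2 = w then (1 : ℤ) else 0)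
  have hswap : E'.filter (·.swap ∈ E) = (E.filter (·.swap ∈ E')).image Prod.swap := by
    ext e
    simp [Prod.swap_eq_iff_eq_swap, and_comm]
  have hcancel := netOutflow_image_swap (E.filter (·.swap ∈ E')) w
  rw [← hswap] at hcancel
  simp only [netOutflow] at hcancel ⊢
  rw [Finset.sum_union h]
  linarith

/-- The augmenting path of the Ford–Fulkerson argument. -/
theorem IsDipath.reaches_reverseAlong {P : List V} (hP : IsDipath A z v P)
    (hcut : ∀ e ∈ A, Reaches (A.erase e) z v) : Reaches (reverseAlong A P) z v := by
  -- Otherwise the set `S` reached in the residual digraph is left by exactly one arc of `P` and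
  -- by no other arc of `A`, so deleting that arc separates `z` from `v`.
  by_contra hv
  let S : Set V := {w | Reaches (reverseAlong A P) z w}
  have hzS : z ∈ S := Reaches.refl _ z
  have hclosed : ∀ e ∈ reverseAlong A P, e.1 ∈ S → e.2 ∈ S := fun _ he h => h.tail he
  have hback : P.IsChain fun x y => x ∉ S → y ∉ S :=
    isChain_iff_forall_mem_listArcs.2 fun e he hx hy =>
      hx (hclosed e.swap (mem_reverseAlong.2 (Or.inr (by simpa using he))) hy)
  have hPP : IsDipath (listArcs P).toFinset z v P :=
    hP.of_forall_mem_listArcs fun _ he => List.mem_toFinset.2 he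
  obtain ⟨e₀, he₀, hexit₀⟩ := Reaches.exists_mem_not_mem ⟨P, hPP⟩ hzS hv
  rw [List.mem_toFinset] at he₀
  obtain ⟨e, he, hexit⟩ := (hcut e₀ (hP.mem_of_mem_listArcs he₀)).exists_mem_not_mem hzS hv
  obtain ⟨hee₀, heA⟩ := Finset.mem_erase.1 he
  have heP : e ∈ listArcs P := by
    by_contra heP
    exact hexit.2 (hclosed e (mem_reverseAlong.2 (Or.inl ⟨heA, heP⟩)) hexit.1)
  exact hee₀ (subsingleton_listArcs_exiting hback ⟨heP, hexit⟩ ⟨he₀, hexit₀⟩)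

/-- Menger's theorem for two arc-disjoint paths. -/
theorem twoReaches_of_forall_reaches_erase (hzv : Reaches A z v)
    (hcut : ∀ e ∈ A, Reaches (A.erase e) z v) : TwoReaches A z v := by
  obtain rfl | hne := eq_or_ne z v
  · have hz : IsDipath A z z [z] :=
      ⟨List.cons_ne_nil _ _, rfl, rfl, List.nodup_singleton _, .singleton _⟩
    exact ⟨[z], [z], hz, hz, fun e he => by simp [listArcs] at he⟩
  obtain ⟨P, hP⟩ := hzv
  obtain ⟨Q, hQ⟩ := hP.reaches_reverseAlong hcut
  set EP := (listArcs P).toFinset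
  set EQ := (listArcs Q).toFinset
  have hQA (e : V × V) (he : e ∈ EQ) : (e ∈ A ∧ e ∉ EP) ∨ e.swap ∈ EP := by
    simpa [EP] using mem_reverseAlong.1 (hQ.mem_of_mem_listArcs (List.mem_toFinset.1 he))
  have hdisj : Disjoint (EP.filter (·.swap ∉ EQ)) (EQ.filter (·.swap ∉ EP)) := by
    refine Finset.disjoint_left.2 fun e heP heQ => ?_
    rw [Finset.mem_filter] at heP heQ
    rcases hQA e heQ.1 with h | h
    · exact h.2 heP.1
    · exact heQ.2 h
  -- The flow `P + Q` of value 2, with antiparallel pairs of arcs cancelled.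
  refine twoReaches_of_netOutflow (F := EP.filter (·.swap ∉ EQ) ∪ EQ.filter (·.swap ∉ EP))
    ?_ hne fun w => ?_
  · intro e he
    rcases Finset.mem_union.1 he with he | he
    · exact hP.mem_of_mem_listArcs (List.mem_toFinset.1 (Finset.mem_filter.1 he).1)
    · rw [Finset.mem_filter] at he
      exact ((hQA e he.1).resolve_right he.2).1
  · rw [netOutflow_cancel _ _ hdisj, netOutflow_listArcs hP, netOutflow_listArcs hQ]
    ring

end Menger

end

theorem stmt_6_general {V : Type*} [DecidableEq V] (A : Finset (V × V))
    (v : V) (U : Set V)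
    (hU : U = {u : V | TwoReaches A u v})
    (x s t : V)
    (hst : s ≠ t)
    (hsU : ∃ y ∈ U, (s, y) ∈ A) (htU : ∃ y ∈ U, (t, y) ∈ A) :
    ¬(ReachesWithin A Uᶜ x s ∧ ReachesWithin A Uᶜ x t) := by
  rintro ⟨⟨p, hp, hpU⟩, q, hq, hqU⟩
  obtain ⟨y, hyU, hsy⟩ := hsU
  obtain ⟨y', hy'U, hty'⟩ := htU
  subst hU
  -- `z` is the last vertex of `p` on `q`: from there the paths to `s` and `t` are disjoint.
  obtain ⟨z, l₁, hl₁p, hzq, hl₁q⟩ :=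
    exists_cons_suffix_forall_not_mem ⟨x, hp.head_mem, hq.head_mem⟩
  obtain ⟨l₀, l₂, rfl⟩ := List.append_of_mem hzq
  have hl₂q : z :: l₂ <:+ l₀ ++ z :: l₂ := List.suffix_append _ _
  have h₁ := hp.of_cons_suffix hl₁p
  have h₂ := hq.of_cons_suffix hl₂q
  have hcut (e : V × V) (_ : e ∈ A) : Reaches (A.erase e) z v :=
    reaches_erase_of_fork h₁ h₂ (fun w hw hw₂ => hl₁q w hw (hl₂q.subset (.tail _ hw₂)))
      hsy hty' hyU hy'U (fun hy => hqU y (hl₂q.subset (.tail _ hy)) hyU)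
      (fun hy => hpU y' (hl₁p.subset (.tail _ hy)) hy'U) hst e
  exact hpU z (hl₁p.subset List.mem_cons_self) <|
    twoReaches_of_forall_reaches_erase ((Reaches.tail ⟨_, h₁⟩ hsy).trans hyU.reaches) hcut

/-- In a strongly connected digraph, with `U` the set of vertices two-reaching `v` and `C`
a connected component of the underlying graph induced on `Uᶜ`, no vertex of `C` has
directed paths within `Uᶜ` to two distinct vertices of `C` each of which is the tail of an
arc into `U`. -/
theorem stmt_6 {V : Type*} [Fintype V] [DecidableEq V] (A : Finset (V × V))
    (hsc : StronglyConnected A) (v : V) (U : Set V)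
    (hU : U = {u : V | TwoReaches A u v})
    (C : ((underlying A).induce Uᶜ).ConnectedComponent)
    (x s t : V) (hx : x ∈ Uᶜ) (hs : s ∈ Uᶜ) (ht : t ∈ Uᶜ)
    (hxC : ((underlying A).induce Uᶜ).connectedComponentMk ⟨x, hx⟩ = C)
    (hsC : ((underlying A).induce Uᶜ).connectedComponentMk ⟨s, hs⟩ = C)
    (htC : ((underlying A).induce Uᶜ).connectedComponentMk ⟨t, ht⟩ = C)
    (hst : s ≠ t)
    (hsU : ∃ y ∈ U, (s, y) ∈ A) (htU : ∃ y ∈ U, (t, y) ∈ A) :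
    ¬(ReachesWithin A Uᶜ x s ∧ ReachesWithin A Uᶜ x t) :=
  stmt_6_general A v U hU x s t hst hsU htU
end
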